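/- Let T, U, W₁, W₂, Y₁, Y₂ be random variables on a common probability space taking values in finite sets. If I(W₂;Y₁|(T,W₁)) = I(W₁;Y₂|(T,W₂)) and I(U;Y₁|(T,W₁)) = I(U;Y₁|W₁), then I(T;Y₂|W₂) + I(U;Y₁|W₁) ≤ I(U;Y₁|(T,W₁,W₂)) + I((T,W₁);Y₂|W₂). -/

import Mathlib

open MeasureTheory Real

/-- Shannon entropy (in nats) of a random variable taking values in a finite set. -/
noncomputable def entropy {Ω : Type*} [MeasurableSpace Ω] (μ : Measure Ω)
    {S : Type*} [Fintype S] (X : Ω → S) : ℝ :=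
  ∑ x : S, Real.negMulLog (μ (X ⁻¹' {x})).toReal

/-- Mutual information `I(X;Y) = H(X) + H(Y) - H(X,Y)`. -/
noncomputable def mutualInfo {Ω : Type*} [MeasurableSpace Ω] (μ : Measure Ω)
    {S T : Type*} [Fintype S] [Fintype T] (X : Ω → S) (Y : Ω → T) : ℝ :=
  entropy μ X + entropy μ Y - entropy μ (fun ω => (X ω, Y ω))

/-- Conditional mutual information `I(X;Y|Z) = H(X,Z) + H(Y,Z) - H(X,Y,Z) - H(Z)`. -/
noncomputable def condMutualInfo {Ω : Type*} [MeasurableSpace Ω] (μ : Measure Ω)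
    {S T R : Type*} [Fintype S] [Fintype T] [Fintype R]
    (X : Ω → S) (Y : Ω → T) (Z : Ω → R) : ℝ :=
  entropy μ (fun ω => (X ω, Z ω)) + entropy μ (fun ω => (Y ω, Z ω))
    - entropy μ (fun ω => (X ω, Y ω, Z ω)) - entropy μ Z

/-!
Two applications of the chain rule to `I(U W₂; Y₁ | T W₁)`, one for each order of `U` and `W₂`,
give `I(U;Y₁|TW₁) + I(W₂;Y₁|UTW₁) = I(W₂;Y₁|TW₁) + I(U;Y₁|TW₁W₂)`, and the chain rule also gives
`I(TW₁;Y₂|W₂) = I(T;Y₂|W₂) + I(W₁;Y₂|TW₂)`. With the two hypotheses, the right-hand side minus the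
left-hand side of the inequality is `I(W₂;Y₁|UTW₁)`, which is nonnegative: fiber by fiber of the
conditioning variable, conditional mutual information is a mutual information, and that is
nonnegative by Gibbs' inequality `p log (p / q) ≥ p - q`.
-/

open Finset

section Relabeling

variable {Ω : Type*} [MeasurableSpace Ω] (μ : Measure Ω)
  {S S' T R R' : Type*} [Fintype S] [Fintype S'] [Fintype T] [Fintype R] [Fintype R']

lemma entropy_congr_equiv (e : S ≃ S') {X : Ω → S} {X' : Ω → S'} (h : ∀ ω, X' ω = e (X ω)) :
    entropy μ X' = entropy μ X := by
  obtain rfl : X' = e ∘ X := funext h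
  unfold entropy
  rw [← e.sum_comp]
  refine sum_congr rfl fun x _ => ?_
  congr 3
  ext ω
  simp

lemma condMutualInfo_congr_left (e : S ≃ S') {X : Ω → S} {X' : Ω → S'}
    (h : ∀ ω, X' ω = e (X ω)) (Y : Ω → T) (Z : Ω → R) :
    condMutualInfo μ X' Y Z = condMutualInfo μ X Y Z := by
  have hXZ : entropy μ (fun ω => (X' ω, Z ω)) = entropy μ (fun ω => (X ω, Z ω)) :=
    entropy_congr_equiv μ (e.prodCongr (Equiv.refl R)) fun ω => by simp [h]
  have hXYZ : entropy μ (fun ω => (X' ω, Y ω, Z ω)) = entropy μ (fun ω => (X ω, Y ω, Z ω)) :=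
    entropy_congr_equiv μ (e.prodCongr (Equiv.refl (T × R))) fun ω => by simp [h]
  rw [condMutualInfo, condMutualInfo, hXZ, hXYZ]

lemma condMutualInfo_congr_right (e : R ≃ R') {Z : Ω → R} {Z' : Ω → R'}
    (h : ∀ ω, Z' ω = e (Z ω)) (X : Ω → S) (Y : Ω → T) :
    condMutualInfo μ X Y Z' = condMutualInfo μ X Y Z := by
  have hXZ : entropy μ (fun ω => (X ω, Z' ω)) = entropy μ (fun ω => (X ω, Z ω)) :=
    entropy_congr_equiv μ ((Equiv.refl S).prodCongr e) fun ω => by simp [h]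
  have hYZ : entropy μ (fun ω => (Y ω, Z' ω)) = entropy μ (fun ω => (Y ω, Z ω)) :=
    entropy_congr_equiv μ ((Equiv.refl T).prodCongr e) fun ω => by simp [h]
  have hXYZ : entropy μ (fun ω => (X ω, Y ω, Z' ω)) = entropy μ (fun ω => (X ω, Y ω, Z ω)) :=
    entropy_congr_equiv μ ((Equiv.refl S).prodCongr ((Equiv.refl T).prodCongr e))
      fun ω => by simp [h]
  rw [condMutualInfo, condMutualInfo, hXZ, hYZ, hXYZ, entropy_congr_equiv μ e h]

lemma condMutualInfo_pair_left {S₁ S₂ : Type*} [Fintype S₁] [Fintype S₂]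
    (X₁ : Ω → S₁) (X₂ : Ω → S₂) (Y : Ω → T) (Z : Ω → R) :
    condMutualInfo μ (fun ω => (X₁ ω, X₂ ω)) Y Z
      = condMutualInfo μ X₁ Y Z + condMutualInfo μ X₂ Y (fun ω => (X₁ ω, Z ω)) := by
  have hXZ : entropy μ (fun ω => ((X₁ ω, X₂ ω), Z ω))
      = entropy μ (fun ω => (X₂ ω, X₁ ω, Z ω)) :=
    entropy_congr_equiv μ ⟨fun q => ((q.2.1, q.1), q.2.2), fun p => (p.1.2, p.1.1, p.2),
      fun _ => rfl, fun _ => rfl⟩ fun _ => rfl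
  have hXYZ : entropy μ (fun ω => ((X₁ ω, X₂ ω), Y ω, Z ω))
      = entropy μ (fun ω => (X₂ ω, Y ω, X₁ ω, Z ω)) :=
    entropy_congr_equiv μ ⟨fun q => ((q.2.2.1, q.1), q.2.1, q.2.2.2),
      fun p => (p.1.2, p.2.1, p.1.1, p.2.2), fun _ => rfl, fun _ => rfl⟩ fun _ => rfl
  have hX₁YZ : entropy μ (fun ω => (X₁ ω, Y ω, Z ω)) = entropy μ (fun ω => (Y ω, X₁ ω, Z ω)) :=
    entropy_congr_equiv μ ⟨fun q => (q.2.1, q.1, q.2.2), fun p => (p.2.1, p.1, p.2.2),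
      fun _ => rfl, fun _ => rfl⟩ fun _ => rfl
  simp only [condMutualInfo]
  rw [hXZ, hXYZ, hX₁YZ]
  ring

end Relabeling

lemma sub_le_mul_log_div {p q : ℝ} (hp : 0 < p) (hq : 0 < q) : p - q ≤ p * log (p / q) := by
  have h := one_sub_inv_le_log_of_pos (div_pos hp hq)
  rw [inv_div] at h
  calc p - q = p * (1 - q / p) := by field_simp
    _ ≤ p * log (p / q) := mul_le_mul_of_nonneg_left h hp.le

lemma sub_mul_div_le_mul_log {p a b c : ℝ} (hp : 0 ≤ p) (ha : p ≤ a) (hb : p ≤ b) (hc : p ≤ c) :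
    p - a * b / c ≤ p * (log p + log c - log a - log b) := by
  rcases hp.eq_or_lt with rfl | hp
  · have : 0 ≤ a * b / c := div_nonneg (mul_nonneg ha hb) hc
    simpa using this
  · have ha := hp.trans_le ha
    have hb := hp.trans_le hb
    have hc := hp.trans_le hc
    have hlog : log p + log c - log a - log b = log (p / (a * b / c)) := by
      rw [log_div hp.ne' (by positivity), log_div (by positivity) hc.ne',
        log_mul ha.ne' hb.ne']
      ring
    rw [hlog]
    exact sub_le_mul_log_div hp (by positivity)

/-- `I(X;Y) ≥ 0` for an unnormalized joint weight `p` on `A × B`: Gibbs' inequality against the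
product of the marginals, `a x * b y / c`, which has the same total mass `c`. -/
lemma sum_negMulLog_add_negMulLog_sum_le {A B : Type*} [Fintype A] [Fintype B]
    (p : A → B → ℝ) (hp : ∀ x y, 0 ≤ p x y) :
    ∑ x, ∑ y, negMulLog (p x y) + negMulLog (∑ x, ∑ y, p x y)
      ≤ ∑ x, negMulLog (∑ y, p x y) + ∑ y, negMulLog (∑ x, p x y) := by
  set a : A → ℝ := fun x => ∑ y, p x y
  set b : B → ℝ := fun y => ∑ x, p x y
  set c : ℝ := ∑ x, ∑ y, p x y
  have hpa : ∀ x y, p x y ≤ a x := fun x y => single_le_sum (fun y _ => hp x y) (mem_univ y)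
  have hpb : ∀ x y, p x y ≤ b y := fun x y => single_le_sum (fun x _ => hp x y) (mem_univ x)
  have hpc : ∀ x y, p x y ≤ c := fun x y =>
    (hpa x y).trans (single_le_sum (fun x _ => sum_nonneg fun y _ => hp x y) (mem_univ x))
  have hprod : ∑ x, ∑ y, a x * b y / c = c := by
    rcases eq_or_ne c 0 with h | h
    · simp [h]
    · have hbc : ∑ y, b y = c := sum_comm
      simp_rw [← sum_div, ← Fintype.sum_mul_sum, hbc]
      exact mul_div_cancel_right₀ c h
  have hgap : ∑ x, ∑ y, p x y * (log (p x y) + log c - log (a x) - log (b y))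
      = (∑ x, negMulLog (a x) + ∑ y, negMulLog (b y))
        - (∑ x, ∑ y, negMulLog (p x y) + negMulLog c) := by
    simp only [mul_add, mul_sub, sum_add_distrib, sum_sub_distrib, negMulLog, neg_mul,
      sum_neg_distrib]
    rw [sum_comm (f := fun x y => p x y * log (b y))]
    simp only [← sum_mul]
    ring
  have hle : ∑ x, ∑ y, (p x y - a x * b y / c)
      ≤ ∑ x, ∑ y, p x y * (log (p x y) + log c - log (a x) - log (b y)) :=
    sum_le_sum fun x _ => sum_le_sum fun y _ =>
      sub_mul_div_le_mul_log (hp x y) (hpa x y) (hpb x y) (hpc x y)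
  simp only [sum_sub_distrib, hprod] at hle
  change _ ≤ ∑ x, negMulLog (a x) + ∑ y, negMulLog (b y)
  linarith

section Nonnegativity

variable {Ω : Type*} [MeasurableSpace Ω] (μ : Measure Ω)
  {A B C : Type*} [Fintype A] [Fintype B] [Fintype C]

lemma measureReal_eq_sum_preimage_inter [IsFiniteMeasure μ] [MeasurableSpace B]
    [MeasurableSingletonClass B] {Y : Ω → B} (hY : Measurable Y) (s : Set Ω) :
    μ.real s = ∑ y, μ.real (Y ⁻¹' {y} ∩ s) := by
  rw [← measureReal_restrict_apply_univ, ← Set.preimage_univ (f := Y), ← coe_univ,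
    ← sum_measureReal_preimage_singleton _ fun y _ => hY (measurableSet_singleton y)]
  simp only [measureReal_restrict_apply (hY (measurableSet_singleton _))]

lemma entropy_pair (X : Ω → A) (Z : Ω → C) :
    entropy μ (fun ω => (X ω, Z ω)) = ∑ z, ∑ x, negMulLog (μ.real (X ⁻¹' {x} ∩ Z ⁻¹' {z})) := by
  rw [entropy, Fintype.sum_prod_type_right]
  simp only [← Set.singleton_prod_singleton, Set.mk_preimage_prod, measureReal_def]

lemma condMutualInfo_nonneg [IsFiniteMeasure μ] [MeasurableSpace A] [MeasurableSingletonClass A]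
    [MeasurableSpace B] [MeasurableSingletonClass B] {X : Ω → A} {Y : Ω → B}
    (hX : Measurable X) (hY : Measurable Y) (Z : Ω → C) :
    0 ≤ condMutualInfo μ X Y Z := by
  set p : C → A → B → ℝ := fun z x y => μ.real (Y ⁻¹' {y} ∩ (X ⁻¹' {x} ∩ Z ⁻¹' {z}))
  have hXYZ : entropy μ (fun ω => (X ω, Y ω, Z ω)) = ∑ z, ∑ x, ∑ y, negMulLog (p z x y) := by
    rw [entropy_pair, Fintype.sum_prod_type_right]
    refine sum_congr rfl fun z _ => ?_
    rw [sum_comm]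
    simp only [← Set.singleton_prod_singleton, Set.mk_preimage_prod, Set.inter_left_comm, p]
  have hXZ : entropy μ (fun ω => (X ω, Z ω)) = ∑ z, ∑ x, negMulLog (∑ y, p z x y) := by
    rw [entropy_pair]
    simp only [measureReal_eq_sum_preimage_inter μ hY (X ⁻¹' _ ∩ _), p]
  have hYZ : entropy μ (fun ω => (Y ω, Z ω)) = ∑ z, ∑ y, negMulLog (∑ x, p z x y) := by
    rw [entropy_pair]
    simp only [measureReal_eq_sum_preimage_inter μ hX (Y ⁻¹' _ ∩ _), Set.inter_left_comm, p]
  have hZ : entropy μ Z = ∑ z, negMulLog (∑ x, ∑ y, p z x y) := by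
    simp only [entropy, ← measureReal_def, measureReal_eq_sum_preimage_inter μ hX (Z ⁻¹' _),
      measureReal_eq_sum_preimage_inter μ hY (X ⁻¹' _ ∩ _), p]
  have hle := sum_le_sum fun z (_ : z ∈ univ) =>
    sum_negMulLog_add_negMulLog_sum_le (p z) fun _ _ => measureReal_nonneg
  rw [condMutualInfo, hXYZ, hXZ, hYZ, hZ]
  simp only [sum_add_distrib] at hle
  linarith

end Nonnegativity

theorem stmt_9_general
    {Ω : Type*} [MeasurableSpace Ω] (μ : Measure Ω) [IsProbabilityMeasure μ]
    {ST SU SW₁ SW₂ SY₁ SY₂ : Type*}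
    [Fintype ST] [Fintype SU] [Fintype SW₁] [Fintype SW₂] [MeasurableSpace SW₂] [MeasurableSingletonClass SW₂] [Fintype SY₁] [MeasurableSpace SY₁] [MeasurableSingletonClass SY₁] [Fintype SY₂]
    (T : Ω → ST) (U : Ω → SU) (W₁ : Ω → SW₁) (W₂ : Ω → SW₂) (Y₁ : Ω → SY₁) (Y₂ : Ω → SY₂)
    (hW₂ : Measurable W₂) (hY₁ : Measurable Y₁)
    (h0 : condMutualInfo μ W₂ Y₁ (fun ω => (T ω, W₁ ω)) = condMutualInfo μ W₁ Y₂ (fun ω => (T ω, W₂ ω)))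
    (h1 : condMutualInfo μ U Y₁ (fun ω => (T ω, W₁ ω)) = condMutualInfo μ U Y₁ W₁)
    : condMutualInfo μ T Y₂ W₂ + condMutualInfo μ U Y₁ W₁ ≤ condMutualInfo μ U Y₁ (fun ω => (T ω, W₁ ω, W₂ ω)) + condMutualInfo μ (fun ω => (T ω, W₁ ω)) Y₂ W₂ := by
  have hTW₁ := condMutualInfo_pair_left μ T W₁ Y₂ W₂
  have hUW₂ := condMutualInfo_pair_left μ U W₂ Y₁ (fun ω => (T ω, W₁ ω))
  have hW₂U := condMutualInfo_pair_left μ W₂ U Y₁ (fun ω => (T ω, W₁ ω))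
  have hswap := condMutualInfo_congr_left μ (Equiv.prodComm SW₂ SU)
    (X := fun ω => (W₂ ω, U ω)) (X' := fun ω => (U ω, W₂ ω)) (fun _ => rfl)
    Y₁ (fun ω => (T ω, W₁ ω))
  have hregroup := condMutualInfo_congr_right μ
    ((Equiv.prodComm SW₂ (ST × SW₁)).trans (Equiv.prodAssoc ST SW₁ SW₂))
    (Z := fun ω => (W₂ ω, T ω, W₁ ω)) (Z' := fun ω => (T ω, W₁ ω, W₂ ω)) (fun _ => rfl) U Y₁
  have hnonneg := condMutualInfo_nonneg μ hW₂ hY₁ (fun ω => (U ω, T ω, W₁ ω))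
  linarith

theorem stmt_9
    {Ω : Type*} [MeasurableSpace Ω] (μ : Measure Ω) [IsProbabilityMeasure μ]
    {ST SU SW₁ SW₂ SY₁ SY₂ : Type*}
    [Fintype ST] [MeasurableSpace ST] [MeasurableSingletonClass ST] [Fintype SU] [MeasurableSpace SU] [MeasurableSingletonClass SU] [Fintype SW₁] [MeasurableSpace SW₁] [MeasurableSingletonClass SW₁] [Fintype SW₂] [MeasurableSpace SW₂] [MeasurableSingletonClass SW₂] [Fintype SY₁] [MeasurableSpace SY₁] [MeasurableSingletonClass SY₁] [Fintype SY₂] [MeasurableSpace SY₂] [MeasurableSingletonClass SY₂]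
    (T : Ω → ST) (U : Ω → SU) (W₁ : Ω → SW₁) (W₂ : Ω → SW₂) (Y₁ : Ω → SY₁) (Y₂ : Ω → SY₂)
    (hT : Measurable T) (hU : Measurable U) (hW₁ : Measurable W₁) (hW₂ : Measurable W₂) (hY₁ : Measurable Y₁) (hY₂ : Measurable Y₂)
    (h0 : condMutualInfo μ W₂ Y₁ (fun ω => (T ω, W₁ ω)) = condMutualInfo μ W₁ Y₂ (fun ω => (T ω, W₂ ω)))
    (h1 : condMutualInfo μ U Y₁ (fun ω => (T ω, W₁ ω)) = condMutualInfo μ U Y₁ W₁)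
    : condMutualInfo μ T Y₂ W₂ + condMutualInfo μ U Y₁ W₁ ≤ condMutualInfo μ U Y₁ (fun ω => (T ω, W₁ ω, W₂ ω)) + condMutualInfo μ (fun ω => (T ω, W₁ ω)) Y₂ W₂ :=
  stmt_9_general μ T U W₁ W₂ Y₁ Y₂ hW₂ hY₁ h0 h1
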